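/- arXiv:1607.03569 — 8 statements merged into one kernel-verified Lean document; each statement's English description precedes it below -/
import Mathlib

section
/- For n ≥ rk, the associated partial Bell polynomial with all parts of size at least r satisfies B_{n,k,(r)}(w) = [n]_{(r-1)k} · B_{n-(r-1)k, k}(v), where v_j = w_{j+r-1}/(j+1)_{r-1}, i.e., the sum over size indices (s_r,...,s_n) with Σ_{i≥r} i·s_i = n and Σ_{i≥r} s_i = k of n!·Π_i (w_i/i!)^{s_i}/s_i! equals [n]_{(r-1)k} times the corresponding sum over unrestricted size indices for the integer n-(r-1)k with weights w_{i+r-1}/(i+r-1)!. -/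
open Finset

@[to_additive]
lemma prod_range_shift {M : Type*} [CommMonoid M] {n m d : ℕ} (h : m + d ≤ n) (A : ℕ → M)
    (h1 : ∀ i, i < d → A i = 1) (h2 : ∀ i, m + d ≤ i → A i = 1) :
    ∏ i ∈ Finset.range n, A i = ∏ j ∈ Finset.range m, A (j + d) := by
  have hsub : Finset.Ico d (d + m) ⊆ Finset.range n := by
    intro x hx
    simp only [Finset.mem_Ico, Finset.mem_range] at *
    omega
  rw [← Finset.prod_subset hsub (by
    intro x hx hx2
    simp only [Finset.mem_Ico, Finset.mem_range, not_and, not_lt] at *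
    rcases lt_or_ge x d with h' | h'
    · exact h1 x h'
    · exact h2 x (by have := hx2 h'; omega))]
  rw [Finset.prod_Ico_eq_prod_range]
  simp only [Nat.add_sub_cancel_left]
  exact Finset.prod_congr rfl fun j _ => by rw [Nat.add_comm]

@[to_additive]
lemma fin_prod_shift {M : Type*} [CommMonoid M] {n m d : ℕ} (hmd : m + d ≤ n)
    (s : Fin n → ℕ) (h1 : ∀ i : Fin n, i.1 < d → s i = 0)
    (h2 : ∀ i : Fin n, m + d ≤ i.1 → s i = 0)
    (f : ℕ → ℕ → M) (hf : ∀ x, f x 0 = 1) :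
    ∏ i : Fin n, f i.1 (s i)
      = ∏ j : Fin m, f (j.1 + d) (s ⟨j.1 + d, by have := j.2; omega⟩) := by
  set S : ℕ → ℕ := fun x => if h : x < n then s ⟨x, h⟩ else 0 with hS
  have hSs : ∀ i : Fin n, s i = S i.1 := by
    intro i; simp [hS, i.2]
  have step1 : ∏ i : Fin n, f i.1 (s i) = ∏ x ∈ Finset.range n, f x (S x) := by
    rw [← Fin.prod_univ_eq_prod_range (fun x => f x (S x)) n]
    exact Finset.prod_congr rfl fun i _ => by rw [hSs]
  rw [step1]
  rw [prod_range_shift hmd (fun x => f x (S x))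
      (by
        intro x hx
        by_cases hxn : x < n
        · show f x (S x) = 1
          rw [show S x = 0 from by simpa [hS, hxn] using h1 ⟨x, hxn⟩ hx, hf]
        · show f x (S x) = 1
          simp only [hS]; rw [dif_neg hxn, hf])
      (by
        intro x hx
        by_cases hxn : x < n
        · show f x (S x) = 1
          rw [show S x = 0 from by simpa [hS, hxn] using h2 ⟨x, hxn⟩ hx, hf]
        · show f x (S x) = 1
          simp only [hS]; rw [dif_neg hxn, hf])]
  rw [← Fin.prod_univ_eq_prod_range (fun x => f (x + d) (S (x + d))) m]
  refine Finset.prod_congr rfl fun j _ => ?_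
  have hj : j.1 + d < n := by have := j.2; omega
  simp [hS, hj]

set_option maxHeartbeats 1000000 in
/-- `B_{n,k,(r)}(w) = [n]_{(r-1)k} · B_{n-(r-1)k,k}(v)` with
`v_j/j! = w_{j+r-1}/(j+r-1)!`. -/
theorem assoc_partial_bell_lower
    (n k r : ℕ) (hr : 1 ≤ r) (h : r * k ≤ n) (w : ℕ → ℝ) (hw : ∀ i, 0 ≤ w i) :
    (Nat.factorial n : ℝ) *
      ∑ s ∈ (Finset.Iic (fun _ => n : Fin n → ℕ)).filter
          (fun s => (∑ i, (i.1 + 1) * s i) = n ∧ (∑ i, s i) = k ∧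
            ∀ i : Fin n, i.1 + 1 < r → s i = 0),
        ∏ i, (w (i.1 + 1) / (Nat.factorial (i.1 + 1) : ℝ)) ^ s i /
          (Nat.factorial (s i) : ℝ)
    = (Nat.descFactorial n ((r - 1) * k) : ℝ) *
      ((Nat.factorial (n - (r - 1) * k) : ℝ) *
        ∑ t ∈ (Finset.Iic (fun _ => n : Fin (n - (r - 1) * k) → ℕ)).filter
            (fun t => (∑ j, (j.1 + 1) * t j) = n - (r - 1) * k ∧ (∑ j, t j) = k),
          ∏ j, (w (j.1 + r) / (Nat.factorial (j.1 + r) : ℝ)) ^ t j /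
            (Nat.factorial (t j) : ℝ)) := by
  rcases Nat.eq_zero_or_pos k with hk | hk
  · -- k = 0 case
    subst hk
    simp only [Nat.mul_zero, Nat.sub_zero, Nat.descFactorial_zero, Nat.cast_one, one_mul]
    congr 1
    apply Finset.sum_congr
    · ext s
      simp only [Finset.mem_filter, Finset.mem_Iic]
      constructor
      · rintro ⟨h1, h2, h3, _⟩; exact ⟨h1, h2, h3⟩
      · rintro ⟨h1, h2, h3⟩
        refine ⟨h1, h2, h3, fun i _ => ?_⟩
        exact (Finset.sum_eq_zero_iff).1 h3 i (Finset.mem_univ i)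
    · intro s hs
      simp only [Finset.mem_filter] at hs
      obtain ⟨-, -, hz0⟩ := hs
      have hz : ∀ i, s i = 0 :=
        fun i => (Finset.sum_eq_zero_iff).1 hz0 i (Finset.mem_univ i)
      simp [hz]
  · -- k ≥ 1
    have hd : r = (r - 1) + 1 := by omega
    set d := r - 1 with hdd
    set m := n - d * k with hm
    have hrk : r * k = d * k + k := by rw [hd, Nat.succ_mul]
    have hdk : d * k ≤ n := by omega
    have hmn : m + d * k = n := by omega
    have hmd : m + d ≤ n := by
      have h1 : d * 1 ≤ d * k := Nat.mul_le_mul_left d hk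
      omega
    have hfact : (Nat.factorial m) * Nat.descFactorial n (d * k) = Nat.factorial n := by
      rw [hm]; exact Nat.factorial_mul_descFactorial hdk
    -- upper vanishing lemma
    have upper : ∀ s : Fin n → ℕ, (∑ i, (i.1 + 1) * s i) = n → (∑ i, s i) = k →
        (∀ i : Fin n, i.1 + 1 < r → s i = 0) → ∀ i : Fin n, m + d ≤ i.1 → s i = 0 := by
      intro s hs1 hs2 hs3 i0 hi0
      by_contra hne
      have hpos : 1 ≤ s i0 := Nat.one_le_iff_ne_zero.2 hne
      have hb : ∀ i : Fin n, r * s i + (if i = i0 then m else 0) ≤ (i.1 + 1) * s i := by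
        intro i
        by_cases hii : i = i0
        · subst hii
          rw [if_pos rfl]
          have h1 : r + m ≤ i.1 + 1 := by omega
          calc r * s i + m ≤ r * s i + m * s i := by
                have : m * 1 ≤ m * s i := Nat.mul_le_mul_left m hpos
                omega
            _ = (r + m) * s i := by ring
            _ ≤ (i.1 + 1) * s i := Nat.mul_le_mul_right _ h1
        · rw [if_neg hii]
          simp only [Nat.add_zero]
          rcases Nat.eq_zero_or_pos (s i) with hz | hpos'
          · simp [hz]
          · have : ¬ (i.1 + 1 < r) := fun hc => by
              have := hs3 i hc; omega
            exact Nat.mul_le_mul_right _ (by omega)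
      have hsum := Finset.sum_le_sum (fun i (_ : i ∈ Finset.univ) => hb i)
      rw [Finset.sum_add_distrib, ← Finset.mul_sum, hs2, hs1] at hsum
      simp only [Finset.sum_ite_eq', Finset.mem_univ, if_true] at hsum
      omega
    -- reduce to equality of sums
    have key : ∑ s ∈ (Finset.Iic (fun _ => n : Fin n → ℕ)).filter
          (fun s => (∑ i, (i.1 + 1) * s i) = n ∧ (∑ i, s i) = k ∧
            ∀ i : Fin n, i.1 + 1 < r → s i = 0),
        ∏ i, (w (i.1 + 1) / (Nat.factorial (i.1 + 1) : ℝ)) ^ s i /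
          (Nat.factorial (s i) : ℝ)
        = ∑ t ∈ (Finset.Iic (fun _ => n : Fin m → ℕ)).filter
            (fun t => (∑ j, (j.1 + 1) * t j) = m ∧ (∑ j, t j) = k),
          ∏ j, (w (j.1 + r) / (Nat.factorial (j.1 + r) : ℝ)) ^ t j /
            (Nat.factorial (t j) : ℝ) := by
      refine Finset.sum_nbij'
        (fun s (j : Fin m) =>
          s ⟨j.1 + d, Nat.lt_of_lt_of_le (Nat.add_lt_add_right j.2 d) hmd⟩)
        (fun t (i : Fin n) => if hi : d ≤ i.1 ∧ i.1 < m + d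
          then t ⟨i.1 - d, by omega⟩ else 0)
        ?_ ?_ ?_ ?_ ?_
      · -- forward membership
        intro s hs
        simp only [Finset.mem_filter, Finset.mem_Iic] at hs ⊢
        obtain ⟨hIic, hs1, hs2, hs3⟩ := hs
        have hs3' : ∀ i : Fin n, i.1 < d → s i = 0 := fun i hi => hs3 i (by omega)
        have hs4 := upper s hs1 hs2 hs3
        have hIic' : ∀ i : Fin n, s i ≤ n := fun i => Pi.le_def.mp hIic i
        refine ⟨Pi.le_def.mpr fun j => hIic' _, ?_, ?_⟩
        · have e0 : (∑ i, s i) = ∑ j : Fin m,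
              s ⟨j.1 + d, Nat.lt_of_lt_of_le (Nat.add_lt_add_right j.2 d) hmd⟩ :=
            fin_sum_shift hmd s hs3' hs4 (fun _ c => c) (fun _ => rfl)
          have e1 : (∑ i, (i.1 + 1) * s i) = ∑ j : Fin m, (j.1 + d + 1) *
              s ⟨j.1 + d, Nat.lt_of_lt_of_le (Nat.add_lt_add_right j.2 d) hmd⟩ :=
            fin_sum_shift hmd s hs3' hs4 (fun x c => (x + 1) * c) (by simp)
          have hk2 : (∑ j : Fin m,
              s ⟨j.1 + d, Nat.lt_of_lt_of_le (Nat.add_lt_add_right j.2 d) hmd⟩) = k :=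
            e0.symm.trans hs2
          have e3 : (∑ j : Fin m, (j.1 + d + 1) *
              s ⟨j.1 + d, Nat.lt_of_lt_of_le (Nat.add_lt_add_right j.2 d) hmd⟩)
              = (∑ j : Fin m, (j.1 + 1) *
                s ⟨j.1 + d, Nat.lt_of_lt_of_le (Nat.add_lt_add_right j.2 d) hmd⟩)
              + d * (∑ j : Fin m,
                s ⟨j.1 + d, Nat.lt_of_lt_of_le (Nat.add_lt_add_right j.2 d) hmd⟩) := by
            rw [Finset.mul_sum, ← Finset.sum_add_distrib]
            exact Finset.sum_congr rfl fun j _ => by ring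
          rw [hk2] at e3
          omega
        · exact (fin_sum_shift hmd s hs3' hs4 (fun _ c => c) (fun _ => rfl)).symm.trans hs2
      · -- backward membership
        intro t ht
        simp only [Finset.mem_filter, Finset.mem_Iic] at ht ⊢
        obtain ⟨hIic, ht1, ht2⟩ := ht
        set u : Fin n → ℕ := fun i => if hi : d ≤ i.1 ∧ i.1 < m + d
          then t ⟨i.1 - d, by omega⟩ else 0 with hu
        have hu1 : ∀ i : Fin n, i.1 < d → u i = 0 := by
          intro i hi; simp only [hu]; rw [dif_neg (by omega)]
        have hu2 : ∀ i : Fin n, m + d ≤ i.1 → u i = 0 := by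
          intro i hi; simp only [hu]; rw [dif_neg (by omega)]
        have huv : ∀ j : Fin m,
            u ⟨j.1 + d, Nat.lt_of_lt_of_le (Nat.add_lt_add_right j.2 d) hmd⟩ = t j := by
          intro j
          have hj := j.2
          simp only [hu]
          rw [dif_pos (by constructor <;> omega)]
          congr 1
          exact Fin.ext (by simp)
        refine ⟨?_, ?_, ?_, ?_⟩
        · exact Pi.le_def.mpr fun i => by
            show u i ≤ n
            simp only [hu]
            split
            · exact Pi.le_def.mp hIic _
            · exact Nat.zero_le n
        · have e1 : (∑ i, (i.1 + 1) * u i) = ∑ j : Fin m, (j.1 + d + 1) *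
              u ⟨j.1 + d, Nat.lt_of_lt_of_le (Nat.add_lt_add_right j.2 d) hmd⟩ :=
            fin_sum_shift hmd u hu1 hu2 (fun x c => (x + 1) * c) (by simp)
          have e2 : (∑ j : Fin m, (j.1 + d + 1) *
              u ⟨j.1 + d, Nat.lt_of_lt_of_le (Nat.add_lt_add_right j.2 d) hmd⟩)
              = (∑ j : Fin m, (j.1 + 1) * t j) + d * (∑ j : Fin m, t j) := by
            rw [Finset.mul_sum, ← Finset.sum_add_distrib]
            exact Finset.sum_congr rfl fun j _ => by rw [huv]; ring
          show (∑ i, (i.1 + 1) * u i) = n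
          rw [e1, e2, ht1, ht2]
          omega
        · have e0 : (∑ i, u i) = ∑ j : Fin m,
              u ⟨j.1 + d, Nat.lt_of_lt_of_le (Nat.add_lt_add_right j.2 d) hmd⟩ :=
            fin_sum_shift hmd u hu1 hu2 (fun _ c => c) (fun _ => rfl)
          show (∑ i, u i) = k
          rw [e0, ← ht2]
          exact Finset.sum_congr rfl fun j _ => huv j
        · intro i hi
          show u i = 0
          exact hu1 i (by omega)
      · -- left inverse
        intro s hs
        simp only [Finset.mem_filter, Finset.mem_Iic] at hs
        obtain ⟨hIic, hs1, hs2, hs3⟩ := hs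
        have hs4 := upper s hs1 hs2 hs3
        funext i
        by_cases hi : d ≤ i.1 ∧ i.1 < m + d
        · simp only [dif_pos hi]
          congr 1
          exact Fin.ext (by simp; omega)
        · simp only [dif_neg hi]
          rcases not_and_or.1 hi with hi' | hi'
          · exact (hs3 i (by omega)).symm
          · exact (hs4 i (by omega)).symm
      · -- right inverse
        intro t ht
        funext j
        have hj := j.2
        show (if hi : d ≤ j.1 + d ∧ j.1 + d < m + d
          then t ⟨j.1 + d - d, by omega⟩ else 0) = t j
        rw [dif_pos ⟨Nat.le_add_left d _, by omega⟩]
        congr 1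
        exact Fin.ext (by simp)
      · -- values
        intro s hs
        simp only [Finset.mem_filter, Finset.mem_Iic] at hs
        obtain ⟨hIic, hs1, hs2, hs3⟩ := hs
        have hs3' : ∀ i : Fin n, i.1 < d → s i = 0 := fun i hi => hs3 i (by omega)
        have hs4 := upper s hs1 hs2 hs3
        have hps := fin_prod_shift hmd s hs3' hs4
          (fun x c => (w (x + 1) / (Nat.factorial (x + 1) : ℝ)) ^ c /
            (Nat.factorial c : ℝ)) (by intro x; simp)
        refine hps.trans (Finset.prod_congr rfl fun j _ => ?_)
        have hjr : j.1 + d + 1 = j.1 + r := by omega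
        show (w (j.1 + d + 1) / (Nat.factorial (j.1 + d + 1) : ℝ)) ^
            (s ⟨j.1 + d, Nat.lt_of_lt_of_le (Nat.add_lt_add_right j.2 d) hmd⟩) /
            (Nat.factorial (s ⟨j.1 + d,
              Nat.lt_of_lt_of_le (Nat.add_lt_add_right j.2 d) hmd⟩) : ℝ) = _
        rw [hjr]
    rw [key, ← hfact]
    push_cast
    ring
end

section
/- The associated partial Bell polynomials B^{(r)}_{n,k}(w) (parts of size at most r) satisfy the recurrence B^{(r)}_{n+1,k}(w) = Σ_{i = max(0, n-rk+r)}^{min(r-1, n-k+1)} C(n,i) · w_{i+1} · B^{(r)}_{n-i, k-1}(w), for k ≤ n+1 ≤ rk, with the convention B^{(r)}_{i,0}(w) = δ_{i,0}. -/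
open Finset

/-- The associated partial Bell polynomial `B^{(r)}_{n,k}(w)` (all parts of size at most `r`). -/
noncomputable def BellUpper (w : ℕ → ℝ) (r n k : ℕ) : ℝ :=
  (Nat.factorial n : ℝ) *
    ∑ s ∈ (Finset.Iic (fun _ => n : Fin n → ℕ)).filter
        (fun s => (∑ i, (i.1 + 1) * s i) = n ∧ (∑ i, s i) = k ∧
          ∀ i : Fin n, r < i.1 + 1 → s i = 0),
      ∏ i, (w (i.1 + 1) / (Nat.factorial (i.1 + 1) : ℝ)) ^ s i /
        (Nat.factorial (s i) : ℝ)

open scoped Nat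

/-! Multiply `B^{(r)}_{n+1,k}` by the identity `n + 1 = Σ_j (j + 1) s_j`, valid on every
multiplicity vector `s` of a partition of `n + 1`. For fixed `j`, removing one part of size `j + 1`
is a bijection from the vectors with `s_j ≠ 0` onto the multiplicity vectors for `(n - j, k - 1)`,
and it turns `(j + 1) s_j · n!` times the weight of `s` into `C(n, j) w_{j+1} (n - j)!` times the
weight of the smaller vector. The summation range is where `B^{(r)}_{n-j,k-1}` can be nonzero:
`k - 1 ≤ n - j ≤ r (k - 1)`. -/

/-- `s i` is the number of parts of size `i + 1`; the length `N` may exceed `m`, since the weighted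
sum forces the extra entries to vanish. -/
def bellIndex (r N m k : ℕ) : Finset (Fin N → ℕ) :=
  (Iic fun _ => m).filter fun s =>
    (∑ i, (i.1 + 1) * s i) = m ∧ (∑ i, s i) = k ∧ ∀ i : Fin N, r < i.1 + 1 → s i = 0

noncomputable def bellWeight (w : ℕ → ℝ) {N : ℕ} (s : Fin N → ℕ) : ℝ :=
  ∏ i, (w (i.1 + 1) / (i.1 + 1)! : ℝ) ^ s i / (s i)!

lemma mul_le_of_sum_mul_eq {N m : ℕ} {s : Fin N → ℕ} (hs : (∑ i, (i.1 + 1) * s i) = m)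
    (i : Fin N) : (i.1 + 1) * s i ≤ m :=
  hs ▸ single_le_sum (f := fun i : Fin N => (i.1 + 1) * s i) (fun _ _ => Nat.zero_le _) (mem_univ i)

lemma mem_bellIndex {r N m k : ℕ} {s : Fin N → ℕ} :
    s ∈ bellIndex r N m k ↔
      (∑ i, (i.1 + 1) * s i) = m ∧ (∑ i, s i) = k ∧ ∀ i : Fin N, r < i.1 + 1 → s i = 0 := by
  refine ⟨fun hs => (mem_filter.1 hs).2, fun hs => mem_filter.2 ⟨?_, hs⟩⟩
  exact mem_Iic.2 fun i =>
    (Nat.le_mul_of_pos_left _ i.1.succ_pos).trans (mul_le_of_sum_mul_eq hs.1 i)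

lemma eq_zero_of_mem_bellIndex {r N m k : ℕ} {s : Fin N → ℕ} (hs : s ∈ bellIndex r N m k)
    {i : Fin N} (hi : m ≤ i.1) : s i = 0 := by
  have := mul_le_of_sum_mul_eq (mem_bellIndex.1 hs).1 i
  by_contra h
  nlinarith [Nat.pos_of_ne_zero h]

lemma bellWeight_append_zero (w : ℕ → ℝ) {m d : ℕ} (t : Fin m → ℕ) :
    bellWeight w (Fin.append t (0 : Fin d → ℕ)) = bellWeight w t := by
  simp [bellWeight, Fin.prod_univ_add]

lemma append_zero_mem_bellIndex_iff {r m d k : ℕ} {t : Fin m → ℕ} :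
    Fin.append t (0 : Fin d → ℕ) ∈ bellIndex r (m + d) m k ↔ t ∈ bellIndex r m m k := by
  simp [mem_bellIndex, Fin.sum_univ_add, Fin.forall_fin_add]

lemma append_restrict_eq_of_mem_bellIndex {r m d k : ℕ} {s : Fin (m + d) → ℕ}
    (hs : s ∈ bellIndex r (m + d) m k) : Fin.append (fun i => s (Fin.castAdd d i)) 0 = s := by
  conv_rhs => rw [← Fin.append_castAdd_natAdd (f := s)]
  congr
  funext i
  exact (eq_zero_of_mem_bellIndex hs (by simp)).symm

lemma bellUpper_eq_sum_bellIndex (w : ℕ → ℝ) {r N m : ℕ} (k : ℕ) (hm : m ≤ N) :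
    BellUpper w r m k = m ! * ∑ s ∈ bellIndex r N m k, bellWeight w s := by
  obtain ⟨d, rfl⟩ := Nat.exists_eq_add_of_le hm
  refine congrArg _ (sum_nbij' (fun t => Fin.append t 0) (fun s i => s (Fin.castAdd d i))
    (s := bellIndex r m m k) (fun t ht => append_zero_mem_bellIndex_iff.2 ht) (fun s hs => ?_)
    (fun t _ => by simp) (fun s hs => append_restrict_eq_of_mem_bellIndex hs)
    fun t _ => (bellWeight_append_zero w t).symm)
  rw [← append_restrict_eq_of_mem_bellIndex hs] at hs
  exact append_zero_mem_bellIndex_iff.1 hs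

lemma le_of_mem_bellIndex {r N m k : ℕ} {s : Fin N → ℕ} (hs : s ∈ bellIndex r N m k) :
    k ≤ m ∧ m ≤ r * k := by
  obtain ⟨hm, hk, hr⟩ := mem_bellIndex.1 hs
  constructor
  · exact hk ▸ hm ▸ sum_le_sum fun i _ => Nat.le_mul_of_pos_left _ i.1.succ_pos
  · refine hm ▸ hk ▸ (mul_sum univ s r).symm ▸ sum_le_sum fun i _ => ?_
    by_cases h : r < i.1 + 1
    · simp [hr i h]
    · exact Nat.mul_le_mul_right _ (not_lt.1 h)

lemma bellUpper_eq_zero_of_not_le (w : ℕ → ℝ) {r m k : ℕ} (h : ¬(k ≤ m ∧ m ≤ r * k)) :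
    BellUpper w r m k = 0 := by
  rw [bellUpper_eq_sum_bellIndex w k le_rfl, sum_eq_zero, mul_zero]
  exact fun s hs => absurd (le_of_mem_bellIndex hs) h

lemma bellWeight_add_single (w : ℕ → ℝ) {N : ℕ} (t : Fin N → ℕ) (j : Fin N) :
    ((t j : ℝ) + 1) * bellWeight w (t + Pi.single j 1) =
      w (j.1 + 1) / (j.1 + 1)! * bellWeight w t := by
  unfold bellWeight
  rw [Fintype.prod_eq_mul_prod_compl j, Fintype.prod_eq_mul_prod_compl j (fun i => _ / _),
    prod_congr rfl fun i hi => by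
      rw [Pi.add_apply, Pi.single_eq_of_ne (by simpa using hi), add_zero]]
  simp only [Pi.add_apply, Pi.single_eq_same, pow_succ, Nat.factorial_succ (t j), Nat.cast_mul]
  field_simp
  push_cast
  ring

lemma add_single_mem_bellIndex_iff {r N m k : ℕ} {t : Fin N → ℕ} {j : Fin N} (hj : j.1 < r) :
    t + Pi.single j 1 ∈ bellIndex r N (m + (j.1 + 1)) (k + 1) ↔ t ∈ bellIndex r N m k := by
  simp only [mem_bellIndex, Pi.add_apply, Pi.single_apply, mul_add, mul_ite, mul_one, mul_zero,
    sum_add_distrib, sum_ite_eq', mem_univ, ↓reduceIte, Nat.add_right_cancel_iff,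
    Order.lt_add_one_iff, Nat.add_eq_zero_iff, ite_eq_right_iff, one_ne_zero, imp_false,
    and_congr_right_iff]
  refine fun _ _ => forall_congr' fun i => imp_congr_right fun hi => and_iff_left ?_
  rintro rfl
  omega

lemma single_le_of_ne_zero {N : ℕ} {s : Fin N → ℕ} {j : Fin N} (h : s j ≠ 0) :
    (Pi.single j 1 : Fin N → ℕ) ≤ s := by
  intro i
  rcases eq_or_ne i j with rfl | hi
  · simpa [Nat.one_le_iff_ne_zero] using h
  · simp [hi]

lemma sum_mul_bellWeight_eq (w : ℕ → ℝ) {r N m k : ℕ} {j : Fin N} (hj : j.1 < r) :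
    ∑ s ∈ bellIndex r N (m + (j.1 + 1)) (k + 1), (s j : ℝ) * bellWeight w s =
      w (j.1 + 1) / (j.1 + 1)! * ∑ t ∈ bellIndex r N m k, bellWeight w t := by
  rw [mul_sum, ← sum_filter_of_ne (p := fun s => s j ≠ 0) fun s _ h hs => by simp [hs] at h]
  symm
  refine sum_nbij' (· + Pi.single j 1) (· - Pi.single j 1) (fun t ht => ?_) (fun s hs => ?_)
    (fun t _ => add_tsub_cancel_right t _) (fun s hs => ?_) fun t _ => ?_
  · rw [mem_filter, add_single_mem_bellIndex_iff hj]
    simpa using ht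
  · rw [mem_filter] at hs
    rw [← add_single_mem_bellIndex_iff hj, tsub_add_cancel_of_le (single_le_of_ne_zero hs.2)]
    exact hs.1
  · exact tsub_add_cancel_of_le (single_le_of_ne_zero (mem_filter.1 hs).2)
  · rw [← bellWeight_add_single]
    simp

theorem bellUpper_add_one_add_one (w : ℕ → ℝ) (r n k : ℕ) :
    BellUpper w r (n + 1) (k + 1) =
      ∑ i ∈ range (min r (n + 1)), (n.choose i : ℝ) * w (i + 1) * BellUpper w r (n - i) k := by
  set I := bellIndex r (n + 1) (n + 1) (k + 1)
  have hterm (j : Fin (n + 1)) : n ! * ∑ s ∈ I, (((j.1 + 1) * s j : ℕ) : ℝ) * bellWeight w s =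
      if j.1 < r then (n.choose j : ℝ) * w (j + 1) * BellUpper w r (n - j) k else 0 := by
    split_ifs with hj
    · have hn : n - j.1 + (j.1 + 1) = n + 1 := by omega
      simp_rw [Nat.cast_mul, mul_assoc, ← mul_sum]
      have hI : I = bellIndex r (n + 1) (n - j.1 + (j.1 + 1)) (k + 1) := by rw [hn]
      rw [hI, sum_mul_bellWeight_eq w hj, bellUpper_eq_sum_bellIndex w k (N := n + 1) (by omega),
        Nat.cast_choose ℝ (by omega : j.1 ≤ n), Nat.factorial_succ]
      push_cast
      field_simp
    · refine mul_eq_zero_of_right _ (sum_eq_zero fun s hs => ?_)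
      simp [(mem_bellIndex.1 hs).2.2 j (by omega)]
  calc BellUpper w r (n + 1) (k + 1)
      = n ! * ∑ s ∈ I, ((n + 1 : ℕ) : ℝ) * bellWeight w s := by
        rw [bellUpper_eq_sum_bellIndex w _ le_rfl, Nat.factorial_succ, Nat.cast_mul,
          mul_comm ((n + 1 : ℕ) : ℝ), mul_assoc, mul_sum]
    _ = ∑ j : Fin (n + 1), n ! * ∑ s ∈ I, (((j.1 + 1) * s j : ℕ) : ℝ) * bellWeight w s := by
        conv_rhs => rw [← mul_sum, sum_comm]
        refine congrArg _ (sum_congr rfl fun s hs => ?_)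
        rw [← sum_mul, ← Nat.cast_sum, (mem_bellIndex.1 hs).1]
    _ = ∑ j : Fin (n + 1), if j.1 < r then (n.choose j : ℝ) * w (j + 1) * BellUpper w r (n - j) k
          else 0 := Fintype.sum_congr _ _ hterm
    _ = _ := by
        rw [Fin.sum_univ_eq_sum_range (fun i => if i < r then (n.choose i : ℝ) * w (i + 1) *
          BellUpper w r (n - i) k else 0), ← sum_filter]
        congr 1
        ext i
        simp only [mem_filter, mem_range, Order.lt_add_one_iff, lt_inf_iff]
        omega

theorem assoc_partial_bell_upper_recurrence_general
    (w : ℕ → ℝ) (r n k : ℕ)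
    (hrk : n + 1 ≤ r * k) :
    BellUpper w r (n + 1) k =
      ∑ i ∈ Finset.Icc (n + r - r * k) (min (r - 1) (n + 1 - k)),
        (Nat.choose n i : ℝ) * w (i + 1) * BellUpper w r (n - i) (k - 1) := by
  obtain ⟨k, rfl⟩ : ∃ k', k = k' + 1 :=
    Nat.exists_eq_add_one.2 (Nat.pos_of_ne_zero (by rintro rfl; simp at hrk))
  have hr : 0 < r := Nat.pos_of_ne_zero (by rintro rfl; simp at hrk)
  rw [mul_add_one] at hrk
  rw [bellUpper_add_one_add_one, Nat.add_sub_cancel, Nat.add_sub_add_right, mul_add_one]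
  refine (sum_subset (fun i hi => ?_) fun i hi hi' => ?_).symm
  · simp only [mem_Icc, tsub_le_iff_right, le_inf_iff, mem_range, lt_inf_iff,
      Order.lt_add_one_iff] at hi ⊢
    omega
  · refine mul_eq_zero_of_right _ (bellUpper_eq_zero_of_not_le w ?_)
    simp only [mem_range, lt_inf_iff, Order.lt_add_one_iff, mem_Icc, tsub_le_iff_right,
      le_inf_iff, not_and, not_le] at hi hi'
    omega

/-- the recurrence
`B^{(r)}_{n+1,k}(w) = Σ_{i=max(0,n-rk+r)}^{min(r-1,n-k+1)} C(n,i)·w_{i+1}·B^{(r)}_{n-i,k-1}(w)`. -/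
theorem assoc_partial_bell_upper_recurrence
    (w : ℕ → ℝ) (hw : ∀ i, 0 ≤ w i) (r n k : ℕ)
    (hk : k ≤ n + 1) (hrk : n + 1 ≤ r * k) :
    BellUpper w r (n + 1) k =
      ∑ i ∈ Finset.Icc (n + r - r * k) (min (r - 1) (n + 1 - k)),
        (Nat.choose n i : ℝ) * w (i + 1) * BellUpper w r (n - i) (k - 1) :=
  assoc_partial_bell_upper_recurrence_general w r n k hrk
end

section
/- For 1 ≤ k ≤ n, the normalized partial Bell polynomial Z_{n,k}(x) := B_{n,k}(w)/n! (with x_i = w_i/i!) evaluated at x_i = (1/2)_{i-1}/i! equals (2n-k-1)! / (2^{2(n-k)} · n! · (n-k)! · (k-1)!), where (a)_m denotes the rising factorial. -/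
/-!
With `x_i = (1/2)_{i-1}/i!` one has `x_{i+1} = catalan i / 4^i`, so `∑ x_i t^i = t·C(t/4)` where
`C = 1 + t C²` is the Catalan generating function. By the multinomial theorem, `Z_{n,k}(x)` is the
coefficient of `t^n` in `(∑ x_i t^i)^k / k!`, i.e. `4^{-(n-k)} [t^{n-k}] C^k / k!`. Multiplying the
functional equation by `C^k` gives `t C^{k+2} = C^{k+1} - C^k`, and this recurrence in `k` yields
`[t^m] C^k = k (2m+k-1)! / ((m+k)! m!)`.
-/

open Finset PowerSeries
open scoped Nat

section
variable {R : Type*} [CommSemiring R] {ι : Type*} [DecidableEq ι]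

theorem PowerSeries.coeff_sum_C_mul_X_pow_pow (s : Finset ι) (c : ι → R) (e : ι → ℕ) (n k : ℕ) :
    coeff n ((∑ i ∈ s, C (c i) * X ^ e i) ^ k) =
      ∑ t ∈ (piAntidiag s k).filter (fun t ↦ ∑ i ∈ s, e i * t i = n),
        (Nat.multinomial s t : R) * ∏ i ∈ s, c i ^ t i := by
  rw [sum_pow_eq_sum_piAntidiag, map_sum, sum_filter]
  refine sum_congr rfl fun t _ ↦ ?_
  have : (Nat.multinomial s t : R⟦X⟧) * ∏ i ∈ s, (C (c i) * X ^ e i) ^ t i =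
      C ((Nat.multinomial s t : R) * ∏ i ∈ s, c i ^ t i) * X ^ (∑ i ∈ s, e i * t i) := by
    simp only [mul_pow, prod_mul_distrib, ← pow_mul, prod_pow_eq_pow_sum, map_mul, map_prod,
      map_pow, map_natCast, mul_assoc]
  rw [this, coeff_C_mul_X_pow]
  simp only [eq_comm]

end

section
variable {R : Type*} [CommRing R]

theorem PowerSeries.coeff_pow_eq_of_X_pow_dvd_sub {f g : R⟦X⟧} {n : ℕ}
    (h : X ^ (n + 1) ∣ f - g) (k : ℕ) : coeff n (f ^ k) = coeff n (g ^ k) := by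
  have := X_pow_dvd_iff.mp (h.trans (sub_dvd_pow_sub_pow f g k)) n n.lt_succ_self
  rwa [map_sub, sub_eq_zero] at this

theorem PowerSeries.X_pow_succ_dvd_X_mul_sub (f : R⟦X⟧) (n : ℕ) :
    X ^ (n + 1) ∣ X * f - ∑ i : Fin n, C (coeff i f) * X ^ (i.1 + 1) := by
  have htrunc : ∑ i : Fin n, C (coeff i f) * X ^ (i.1 + 1) = X * (trunc n f : R⟦X⟧) := by
    rw [trunc_apply, ← range_eq_Ico, ← Polynomial.coeToPowerSeries.ringHom_apply, map_sum,
      mul_sum, ← Fin.sum_univ_eq_sum_range]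
    refine sum_congr rfl fun i _ ↦ ?_
    rw [Polynomial.coeToPowerSeries.ringHom_apply, Polynomial.coe_monomial,
      monomial_eq_C_mul_X_pow]
    ring
  rw [htrunc, ← mul_sub, pow_succ', sub_eq_of_eq_add (eq_X_pow_mul_shift_add_trunc n f)]
  exact mul_dvd_mul_left X (dvd_mul_right _ _)

end

/-- `Z_{n,k}` with the variables shifted: `a i` stands for `x_{i+1}`. The bound `s ≤ n` only makes
the index set finite; it already follows from `∑ (i + 1) * s i = n`. -/
def normalizedPartialBell {K : Type*} [Field K] (n k : ℕ) (a : ℕ → K) : K :=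
  ∑ s ∈ (Iic (fun _ ↦ n : Fin n → ℕ)).filter
      (fun s ↦ (∑ i, (i.1 + 1) * s i) = n ∧ (∑ i, s i) = k),
    ∏ i, a i.1 ^ s i / (s i)!

section
variable {K : Type*} [Field K] [CharZero K]

theorem normalizedPartialBell_coeff_eq (f : K⟦X⟧) (n k : ℕ) :
    normalizedPartialBell n k (fun i ↦ coeff i f) = coeff n ((X * f) ^ k) / k ! := by
  rw [coeff_pow_eq_of_X_pow_dvd_sub (X_pow_succ_dvd_X_mul_sub f n), coeff_sum_C_mul_X_pow_pow,
    sum_div, normalizedPartialBell]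
  refine sum_congr ?_ fun s hs ↦ ?_
  · ext s
    simp only [mem_filter, mem_piAntidiag, mem_Iic, mem_univ, implies_true, and_true]
    refine ⟨fun ⟨_, hw, hk⟩ ↦ ⟨hk, hw⟩, fun ⟨hk, hw⟩ ↦ ⟨fun i ↦ ?_, hw, hk⟩⟩
    calc s i ≤ (i.1 + 1) * s i := Nat.le_mul_of_pos_left _ i.1.succ_pos
      _ ≤ ∑ j, (j.1 + 1) * s j :=
        single_le_sum (f := fun j ↦ (j.1 + 1) * s j) (fun j _ ↦ Nat.zero_le _) (mem_univ i)
      _ = n := hw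
  · obtain ⟨⟨hk, -⟩, -⟩ := mem_filter.mp hs |>.imp_left mem_piAntidiag.mp
    have hspec : (Nat.multinomial univ s : K) * ((∏ i, (s i)! : ℕ) : K) = k ! := by
      rw [← Nat.cast_mul, mul_comm, Nat.multinomial_spec, hk]
    rw [← hspec, prod_div_distrib, Nat.cast_prod]
    exact (mul_div_mul_left _ _ (Nat.cast_ne_zero.mpr (Nat.multinomial_pos univ s).ne')).symm

theorem cast_catalan_eq_factorial_div (m : ℕ) :
    (catalan m : K) = (2 * m)! / ((m + 1)! * m !) := by
  have h : ((m + 1 : ℕ) : K) * catalan m = (2 * m).choose m := by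
    rw [← Nat.cast_mul, succ_mul_catalan_eq_centralBinom, Nat.centralBinom_eq_two_mul_choose]
  rw [Nat.cast_choose K (by omega), show 2 * m - m = m by omega] at h
  rw [eq_div_iff (by simp [Nat.factorial_ne_zero])] at h
  rw [eq_div_iff (by simp [Nat.factorial_ne_zero]), ← h, Nat.factorial_succ]
  push_cast
  ring

theorem PowerSeries.coeff_catalanSeries_pow_add_two (k m : ℕ) :
    coeff m (catalanSeries ^ (k + 2)) + coeff (m + 1) (catalanSeries ^ k) =
      coeff (m + 1) (catalanSeries ^ (k + 1)) := by
  have h := congrArg (fun g ↦ coeff (m + 1) (catalanSeries ^ k * g))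
    catalanSeries_sq_mul_X_add_one
  simp only [mul_add, mul_one, ← mul_assoc, ← pow_add, map_add, coeff_succ_mul_X] at h
  rwa [pow_succ]

theorem PowerSeries.cast_coeff_catalanSeries_pow (k m : ℕ) :
    ((coeff m (catalanSeries ^ (k + 1)) : ℕ) : K) =
      (k + 1) * (2 * m + k)! / ((m + k + 1)! * m !) := by
  induction k using Nat.twoStepInduction generalizing m with
  | zero => simp [cast_catalan_eq_factorial_div]
  | one =>
    have h := coeff_catalanSeries_pow_add_two 0 m
    rw [pow_zero, coeff_one, if_neg m.succ_ne_zero, add_zero, zero_add, pow_one,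
      catalanSeries_coeff] at h
    rw [h, cast_catalan_eq_factorial_div, show 2 * (m + 1) = 2 * m + 1 + 1 by ring,
      Nat.factorial_succ (2 * m + 1), Nat.factorial_succ m]
    push_cast
    field_simp
    ring
  | more k ih₀ ih₁ =>
    have h := congrArg (Nat.cast : ℕ → K) (coeff_catalanSeries_pow_add_two (k + 1) m)
    rw [Nat.cast_add, ← eq_sub_iff_add_eq] at h
    rw [h, ih₀, ih₁, show 2 * (m + 1) + (k + 1) = 2 * m + k + 2 + 1 by ring,
      show 2 * (m + 1) + k = 2 * m + k + 2 by ring, show 2 * m + (k + 2) = 2 * m + k + 2 by ring,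
      show m + 1 + (k + 1) + 1 = m + k + 2 + 1 by ring,
      show m + (k + 2) + 1 = m + k + 2 + 1 by ring,
      show m + 1 + k + 1 = m + k + 2 by ring, Nat.factorial_succ (2 * m + k + 2),
      Nat.factorial_succ (m + k + 2), Nat.factorial_succ m]
    have hm : ((m + 1 : ℕ) : K) ≠ 0 := Nat.cast_ne_zero.mpr m.succ_ne_zero
    have hmk : ((m + k + 2 + 1 : ℕ) : K) ≠ 0 := Nat.cast_ne_zero.mpr (m + k + 2).succ_ne_zero
    push_cast at hm hmk ⊢
    field_simp
    ring

theorem prod_range_half_add (i : ℕ) :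
    ∏ j ∈ range i, (1 / 2 + j : K) = i.centralBinom * i ! / 4 ^ i := by
  induction i with
  | zero => simp
  | succ i ih =>
    have h := congrArg (Nat.cast : ℕ → K) (Nat.succ_mul_centralBinom_succ i)
    push_cast at h
    rw [prod_range_succ, ih, Nat.factorial_succ, pow_succ]
    push_cast
    field_simp
    linear_combination (-2 : K) * i ! * h

theorem prod_range_half_add_div_factorial (i : ℕ) :
    (∏ j ∈ range i, (1 / 2 + j : K)) / (i + 1)! = catalan i / 4 ^ i := by
  rw [prod_range_half_add, ← succ_mul_catalan_eq_centralBinom, Nat.factorial_succ]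
  have hi : ((i + 1 : ℕ) : K) ≠ 0 := Nat.cast_ne_zero.mpr i.succ_ne_zero
  have hf : (i ! : K) ≠ 0 := Nat.cast_ne_zero.mpr i.factorial_ne_zero
  push_cast at hi ⊢
  field_simp

end

/-- `Z_{n,k}` at `x_i = (1/2)_{i-1}/i!` equals
`(2n-k-1)! / (2^{2(n-k)}·n!·(n-k)!·(k-1)!)`. -/
theorem Z_at_half_rising_factorial (n k : ℕ) (h1 : 1 ≤ k) (h2 : k ≤ n) :
    (∑ s ∈ (Finset.Iic (fun _ => n : Fin n → ℕ)).filter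
        (fun s => (∑ i, (i.1 + 1) * s i) = n ∧ (∑ i, s i) = k),
      ∏ i, ((∏ j ∈ Finset.range i.1, ((1 : ℝ) / 2 + j)) /
          (Nat.factorial (i.1 + 1) : ℝ)) ^ s i / (Nat.factorial (s i) : ℝ))
    = (Nat.factorial (2 * n - k - 1) : ℝ) /
        ((2 : ℝ) ^ (2 * (n - k)) * (Nat.factorial n : ℝ) *
          (Nat.factorial (n - k) : ℝ) * (Nat.factorial (k - 1) : ℝ)) := by
  obtain ⟨j, rfl⟩ : ∃ j, k = j + 1 := ⟨k - 1, by omega⟩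
  obtain ⟨m, rfl⟩ : ∃ m, n = m + (j + 1) := ⟨n - (j + 1), by omega⟩
  have hx : (fun i : ℕ ↦ (∏ l ∈ range i, (1 / 2 + l : ℝ)) / (i + 1)!) =
      fun i ↦ coeff i (rescale 4⁻¹ (map (Nat.castRingHom ℝ) catalanSeries)) := by
    ext i
    rw [prod_range_half_add_div_factorial, coeff_rescale, coeff_map, inv_pow, div_eq_inv_mul,
      catalanSeries_coeff, eq_natCast]
  change normalizedPartialBell _ _ (fun i ↦ (∏ l ∈ range i, (1 / 2 + l : ℝ)) / (i + 1)!) = _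
  rw [hx, normalizedPartialBell_coeff_eq, mul_pow, coeff_X_pow_mul, ← map_pow, coeff_rescale,
    ← map_pow, coeff_map, Nat.coe_castRingHom, cast_coeff_catalanSeries_pow,
    show 2 * (m + (j + 1)) - (j + 1) - 1 = 2 * m + j by omega, Nat.add_sub_cancel,
    Nat.add_sub_cancel, pow_mul, show m + j + 1 = m + (j + 1) by ring, Nat.factorial_succ j]
  push_cast
  rw [inv_pow]
  field_simp
  ring
end

section
/- For 1 ≤ k ≤ n, Σ_{s ∈ S_{n,k}} Π_{i=1}^n (1/i)^{s_i} / s_i! = |s(n,k)|/n!, where |s(n,k)| is the unsigned Stirling number of the first kind. -/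
/-! Write `Z(n, k)` for the left-hand side and `x j = 1 / (j + 1)`. On the cycle types of `n`
we have `∑ j, (j + 1) * s j = n`, so `n * Z(n, k)` splits according to the length `j + 1` of a
marked cycle. Since `s j * x ^ s / s! = x j * x ^ (s - e j) / (s - e j)!` and `(j + 1) * x j = 1`,
removing the marked cycle gives `n * Z(n, k) = ∑ m < n, Z(m, k - 1)`. Telescoping the Stirling
recurrence shows that `|s(n, k)| / n!` satisfies the same recursion and initial values. -/

open Finset

/-- Unsigned Stirling numbers of the first kind (number of permutations of `n`
elements with `k` cycles), via the standard recurrence. -/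
def stirlingFirst : ℕ → ℕ → ℕ
  | 0, 0 => 1
  | 0, _ + 1 => 0
  | _ + 1, 0 => 0
  | n + 1, k + 1 => n * stirlingFirst n (k + 1) + stirlingFirst n k

theorem stirlingFirst_succ_succ_div_factorial {K : Type*} [Field K] [CharZero K] (n k : ℕ) :
    (stirlingFirst (n + 1) (k + 1) : K) / n.factorial =
      ∑ m ∈ range (n + 1), (stirlingFirst m k : K) / m.factorial := by
  induction n with
  | zero => simp [stirlingFirst]
  | succ n ih =>
    rw [sum_range_succ, ← ih, stirlingFirst, Nat.factorial_succ]
    push_cast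
    field_simp

section ExpMonomial

variable {ι K : Type*} [Fintype ι] [DecidableEq ι] [Field K] [CharZero K]

noncomputable def expMonomial (x : ι → K) (s : ι → ℕ) : K :=
  ∏ i, x i ^ s i / (s i).factorial

theorem expMonomial_add_single (x : ι → K) (s : ι → ℕ) (j : ι) :
    (s j + 1) * expMonomial x (s + Pi.single j 1) = x j * expMonomial x s := by
  have hrest : ∏ i ∈ {j}ᶜ, x i ^ (s + Pi.single j 1 : ι → ℕ) i /
      ((s + Pi.single j 1 : ι → ℕ) i).factorial =
        ∏ i ∈ {j}ᶜ, x i ^ s i / (s i).factorial := by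
    refine prod_congr rfl fun i hi => ?_
    rw [Pi.add_apply, Pi.single_eq_of_ne (by simpa using hi), add_zero]
  rw [expMonomial, expMonomial, Fintype.prod_eq_mul_prod_compl j,
    Fintype.prod_eq_mul_prod_compl j, hrest]
  simp only [Pi.add_apply, Pi.single_eq_same, Nat.factorial_succ]
  push_cast
  field_simp
  ring

theorem sum_mul_add_single (c s : ι → ℕ) (j : ι) :
    ∑ i, c i * (s + Pi.single j 1 : ι → ℕ) i = ∑ i, c i * s i + c j := by
  simp [mul_add, sum_add_distrib, Pi.single_apply]

end ExpMonomial

/-- `s i` is the number of cycles of length `i + 1`. -/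
def cycleTypes (N n k : ℕ) : Finset (Fin N → ℕ) :=
  (Iic fun _ => n).filter fun s => (∑ i, (i.1 + 1) * s i) = n ∧ (∑ i, s i) = k

section CycleTypes

variable {N n k : ℕ}

theorem apply_le_of_sum_eq {s : Fin N → ℕ} (h : ∑ i, (i.1 + 1) * s i = n) (j : Fin N) :
    (j.1 + 1) * s j ≤ n :=
  h ▸ single_le_sum (f := fun i => (i.1 + 1) * s i) (fun _ _ => Nat.zero_le _) (mem_univ j)

theorem mem_cycleTypes {s : Fin N → ℕ} :
    s ∈ cycleTypes N n k ↔ (∑ i, (i.1 + 1) * s i) = n ∧ (∑ i, s i) = k := by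
  refine ⟨fun h => (mem_filter.mp h).2,
    fun h => mem_filter.mpr ⟨mem_Iic.mpr fun j => ?_, h⟩⟩
  exact (Nat.le_mul_of_pos_left _ j.1.succ_pos).trans (apply_le_of_sum_eq h.1 j)

theorem apply_eq_zero_of_mem_cycleTypes {s : Fin N → ℕ} (hs : s ∈ cycleTypes N n k)
    {j : Fin N} (hj : n < j.1 + 1) : s j = 0 := by
  have := apply_le_of_sum_eq (mem_cycleTypes.mp hs).1 j
  by_contra h
  nlinarith [Nat.pos_of_ne_zero h]

theorem add_single_mem_cycleTypes {s : Fin N → ℕ} {j : Fin N} :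
    s + Pi.single j 1 ∈ cycleTypes N (n + (j.1 + 1)) (k + 1) ↔ s ∈ cycleTypes N n k := by
  have hcount := sum_mul_add_single (fun _ => 1) s j
  simp only [one_mul] at hcount
  rw [mem_cycleTypes, mem_cycleTypes, sum_mul_add_single, hcount]
  omega

theorem cycleTypes_zero_zero : cycleTypes N 0 0 = {0} := by
  ext s
  simp [mem_cycleTypes, funext_iff]

theorem cycleTypes_zero_succ : cycleTypes N 0 (k + 1) = ∅ := by
  refine eq_empty_of_forall_notMem fun s hs => ?_
  obtain ⟨h1, h2⟩ := mem_cycleTypes.mp hs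
  simp_all [sum_eq_zero_iff]

theorem cycleTypes_succ_zero : cycleTypes N (n + 1) 0 = ∅ := by
  refine eq_empty_of_forall_notMem fun s hs => ?_
  obtain ⟨h1, h2⟩ := mem_cycleTypes.mp hs
  simp_all [sum_eq_zero_iff]

end CycleTypes

section CycleSum

variable {K : Type*} [Field K] [CharZero K] {N : ℕ}

noncomputable def cycleSum (x : Fin N → K) (n k : ℕ) : K :=
  ∑ s ∈ cycleTypes N n k, expMonomial x s

theorem sum_cycleTypes_apply_mul_expMonomial (x : Fin N → K) (j : Fin N) (n k : ℕ) :
    ∑ s ∈ cycleTypes N (n + (j.1 + 1)) (k + 1), (s j : K) * expMonomial x s =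
      x j * cycleSum x n k := by
  have hsub : (cycleTypes N n k).image (· + Pi.single j 1) ⊆
      cycleTypes N (n + (j.1 + 1)) (k + 1) := by
    intro s hs
    obtain ⟨t, ht, rfl⟩ := mem_image.mp hs
    exact add_single_mem_cycleTypes.mpr ht
  have hzero : ∀ s ∈ cycleTypes N (n + (j.1 + 1)) (k + 1),
      s ∉ (cycleTypes N n k).image (· + Pi.single j 1) → (s j : K) * expMonomial x s = 0 := by
    intro s hs hnot
    suffices s j = 0 by simp [this]
    by_contra hj
    have hs' : s - Pi.single j 1 + Pi.single j 1 = s := by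
      ext i
      rcases eq_or_ne i j with rfl | hi
      · simp only [Pi.add_apply, Pi.sub_apply, Pi.single_eq_same]
        omega
      · simp [hi]
    rw [← hs', add_single_mem_cycleTypes] at hs
    exact hnot (mem_image.mpr ⟨_, hs, hs'⟩)
  rw [← sum_subset hsub hzero, sum_image fun _ _ _ _ => add_right_cancel, cycleSum, mul_sum]
  refine sum_congr rfl fun t _ => ?_
  simpa using expMonomial_add_single x t j

def harmonicWeights (N : ℕ) : Fin N → K := fun i => 1 / (i.1 + 1 : K)

theorem succ_mul_harmonicWeights (i : Fin N) : (i.1 + 1 : K) * harmonicWeights N i = 1 :=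
  mul_one_div_cancel (Nat.cast_add_one_ne_zero i.1)

theorem succ_mul_cycleSum_harmonicWeights {n : ℕ} (hn : n + 1 ≤ N) (k : ℕ) :
    (n + 1 : K) * cycleSum (harmonicWeights N) (n + 1) (k + 1) =
      ∑ m ∈ range (n + 1), cycleSum (harmonicWeights N) m k := by
  obtain ⟨r, rfl⟩ := Nat.exists_eq_add_of_le hn
  set x : Fin (n + 1 + r) → K := harmonicWeights (n + 1 + r)
  have hmark : (n + 1 : K) * cycleSum x (n + 1) (k + 1) =
      ∑ j, (j.1 + 1 : K) *
        ∑ s ∈ cycleTypes _ (n + 1) (k + 1), (s j : K) * expMonomial x s := by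
    simp only [cycleSum, mul_sum, ← mul_assoc]
    rw [sum_comm]
    refine sum_congr rfl fun s hs => ?_
    have hlength : (n + 1 : K) = ∑ j, (j.1 + 1 : K) * s j := by
      exact_mod_cast (mem_cycleTypes.mp hs).1.symm
    rw [← sum_mul, hlength]
  have hshort : ∀ i : Fin (n + 1), ((Fin.castAdd r i).1 + 1 : K) *
      ∑ s ∈ cycleTypes _ (n + 1) (k + 1), (s (Fin.castAdd r i) : K) * expMonomial x s =
      cycleSum x (n - i) k := by
    intro i
    have h := sum_cycleTypes_apply_mul_expMonomial x (Fin.castAdd r i) (n - i) k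
    rw [show n - i + ((Fin.castAdd r i).1 + 1) = n + 1 by simp; omega] at h
    rw [h, ← mul_assoc, succ_mul_harmonicWeights, one_mul]
  have hlong : ∀ i : Fin r, ∑ s ∈ cycleTypes _ (n + 1) (k + 1),
      (s (Fin.natAdd (n + 1) i) : K) * expMonomial x s = 0 := by
    intro i
    refine sum_eq_zero fun s hs => ?_
    rw [apply_eq_zero_of_mem_cycleTypes hs (by simp), Nat.cast_zero, zero_mul]
  rw [hmark, Fin.sum_univ_add]
  simp only [hshort, hlong, mul_zero, sum_const_zero, add_zero]
  rw [Fin.sum_univ_eq_sum_range (fun m => cycleSum x (n - m) k),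
    ← sum_range_reflect (fun m => cycleSum x m k), Nat.add_sub_cancel]

theorem cycleSum_harmonicWeights {n : ℕ} (hn : n ≤ N) (k : ℕ) :
    cycleSum (harmonicWeights N) n k = (stirlingFirst n k : K) / n.factorial := by
  induction n using Nat.strong_induction_on generalizing k with
  | _ n ih =>
    rcases n with _ | n <;> rcases k with _ | k
    · simp [cycleSum, cycleTypes_zero_zero, expMonomial, stirlingFirst]
    · simp [cycleSum, cycleTypes_zero_succ, stirlingFirst]
    · simp [cycleSum, cycleTypes_succ_zero, stirlingFirst]
    · have hrec := succ_mul_cycleSum_harmonicWeights (K := K) hn k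
      rw [sum_congr rfl fun m hm => ih m (mem_range.mp hm) (by grind) k,
        ← stirlingFirst_succ_succ_div_factorial] at hrec
      rw [Nat.factorial_succ]
      push_cast
      field_simp
      linear_combination hrec

end CycleSum

theorem Z_at_one_over_i_eq_stirling_first_general (n k : ℕ) :
    (∑ s ∈ (Finset.Iic (fun _ => n : Fin n → ℕ)).filter
        (fun s => (∑ i, (i.1 + 1) * s i) = n ∧ (∑ i, s i) = k),
      ∏ i, ((1 : ℝ) / (i.1 + 1 : ℝ)) ^ s i / (Nat.factorial (s i) : ℝ))
    = (stirlingFirst n k : ℝ) / (Nat.factorial n : ℝ) :=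
  cycleSum_harmonicWeights le_rfl k

/-- `Σ_{s ∈ S_{n,k}} Π_i (1/i)^{s_i}/s_i! = |s(n,k)|/n!`. -/
theorem Z_at_one_over_i_eq_stirling_first (n k : ℕ) (h1 : 1 ≤ k) (h2 : k ≤ n) :
    (∑ s ∈ (Finset.Iic (fun _ => n : Fin n → ℕ)).filter
        (fun s => (∑ i, (i.1 + 1) * s i) = n ∧ (∑ i, s i) = k),
      ∏ i, ((1 : ℝ) / (i.1 + 1 : ℝ)) ^ s i / (Nat.factorial (s i) : ℝ))
    = (stirlingFirst n k : ℝ) / (Nat.factorial n : ℝ) :=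
  Z_at_one_over_i_eq_stirling_first_general n k
end

section
/- For the multiplicative measure on partitions of n with EPPF q_n(s; x) = v_{n,k} · n! · x^s/s! on S_{n,k} (k = Σ s_i), with x known and positive and v an arbitrary parameter sequence, the number of clusters |Π_n| is a complete statistic: if f: [n] → ℝ satisfies E[f(|Π_n|)] = Σ_{k=1}^n f(k) v_{n,k} n! Z_{n,k}(x) = 0 for all valid parameter sequences v (nonnegative, normalized so that probabilities sum to 1), then f(k) = 0 for all k ∈ [n]. -/
open Finset

/-- `Z_{n,k}(x)`, indeterminates indexed by part sizes. -/
noncomputable def Zhyp (n k : ℕ) (x : ℕ → ℝ) : ℝ :=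
  ∑ s ∈ (Finset.Iic (fun _ => n : Fin n → ℕ)).filter
      (fun s => (∑ i, (i.1 + 1) * s i) = n ∧ (∑ i, s i) = k),
    ∏ i, x (i.1 + 1) ^ s i / (Nat.factorial (s i) : ℝ)

lemma Zhyp_pos (n k : ℕ) (hn : 1 ≤ n) (hk1 : 1 ≤ k) (hkn : k ≤ n)
    (x : ℕ → ℝ) (hx : ∀ i, 0 < x i) : 0 < Zhyp n k x := by
  have hnpos : 0 < n := hn
  set a : Fin n := ⟨0, hnpos⟩
  set b : Fin n := ⟨n - k, by omega⟩
  set s : Fin n → ℕ := fun i => (if i = a then k - 1 else 0) + (if i = b then 1 else 0)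
    with hs
  have hmem : s ∈ (Finset.Iic (fun _ => n : Fin n → ℕ)).filter
      (fun s => (∑ i, (i.1 + 1) * s i) = n ∧ (∑ i, s i) = k) := by
    rw [Finset.mem_filter, Finset.mem_Iic]
    refine ⟨?_, ?_, ?_⟩
    · intro i
      simp only [hs]
      split_ifs <;> omega
    · have : ∑ i : Fin n, (i.1 + 1) * s i
          = ∑ i : Fin n, ((i.1 + 1) * (if i = a then k - 1 else 0)
              + (i.1 + 1) * (if i = b then 1 else 0)) := by
        apply Finset.sum_congr rfl
        intro i _; simp [hs, Nat.mul_add]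
      rw [this, Finset.sum_add_distrib]
      simp only [mul_ite, mul_zero, mul_one, Finset.sum_ite_eq', Finset.mem_univ, if_true]
      show (0 + 1) * (k - 1) + (n - k + 1) = n
      omega
    · simp only [hs, Finset.sum_add_distrib, Finset.sum_ite_eq', Finset.mem_univ, if_true]
      omega
  apply Finset.sum_pos'
  · intro t _
    apply Finset.prod_nonneg
    intro i _
    exact div_nonneg (pow_nonneg (hx _).le _) (Nat.cast_nonneg _)
  · refine ⟨s, hmem, ?_⟩
    apply Finset.prod_pos
    intro i _
    exact div_pos (pow_pos (hx _) _) (by exact_mod_cast Nat.factorial_pos _)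

/-- completeness of the number of clusters for the multiplicative
measure: if `Σ_k f(k)·v_{n,k}·n!·Z_{n,k}(x) = 0` for every valid nonnegative
normalized parameter sequence `v`, then `f ≡ 0` on `[n]`. -/
theorem number_of_clusters_complete (n : ℕ) (hn : 1 ≤ n)
    (x : ℕ → ℝ) (hx : ∀ i, 0 < x i) (f : ℕ → ℝ)
    (h : ∀ v : ℕ → ℝ, (∀ k, 0 ≤ v k) →
      (∑ k ∈ Finset.Icc 1 n, v k * (Nat.factorial n : ℝ) * Zhyp n k x) = 1 →
      (∑ k ∈ Finset.Icc 1 n, f k * (v k * (Nat.factorial n : ℝ) * Zhyp n k x)) = 0) :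
    ∀ k ∈ Finset.Icc 1 n, f k = 0 := by
  intro k hk
  rw [Finset.mem_Icc] at hk
  have hZ : 0 < Zhyp n k x := Zhyp_pos n k hn hk.1 hk.2 x hx
  have hfac : (0:ℝ) < (Nat.factorial n : ℝ) := by positivity
  set c : ℝ := ((Nat.factorial n : ℝ) * Zhyp n k x)⁻¹ with hc
  have hcpos : 0 < c := by positivity
  set v : ℕ → ℝ := fun j => if j = k then c else 0 with hv
  have hnn : ∀ j, 0 ≤ v j := by
    intro j; simp only [hv]; split_ifs; exact hcpos.le; exact le_refl 0
  have key : ∀ g : ℕ → ℝ,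
      (∑ j ∈ Finset.Icc 1 n, g j * (v j * (Nat.factorial n : ℝ) * Zhyp n j x))
        = g k := by
    intro g
    rw [Finset.sum_eq_single k]
    · simp only [hv, if_pos rfl, hc]
      field_simp
    · intro j _ hjk
      simp [hv, hjk]
    · intro hkk
      exact absurd (Finset.mem_Icc.mpr hk) hkk
  have hnorm : (∑ j ∈ Finset.Icc 1 n, v j * (Nat.factorial n : ℝ) * Zhyp n j x) = 1 := by
    have := key (fun _ => 1)
    simpa using this
  have := h v hnn hnorm
  rw [key f] at this
  exact this
end

section
/- The partition polytope P_n (the convex hull in ℝ^n of all size indices of partitions of n) has affine dimension n−1; equivalently, P_n is a pyramid with apex e_n (the partition with a single part n) over the convex hull of the size indices with s_n = 0, and the affine span of the vertices of P_n has dimension n−1. -/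
open Finset

/-- the partition polytope `P_n` (convex hull of all size indices of
partitions of `n`) has affine dimension `n-1`: the direction of the affine span of
the size indices has dimension `n-1`. (The convex hull has the same affine span
as the set of its vertices.) -/
theorem partition_polytope_affine_dimension (n : ℕ) (hn : 1 ≤ n) :
    Module.finrank ℝ
      (affineSpan ℝ {x : Fin n → ℝ | ∃ s : Fin n → ℕ,
        (∑ i, (i.1 + 1) * s i) = n ∧ x = fun i => (s i : ℝ)}).direction = n - 1 := by
  obtain ⟨m, rfl⟩ := Nat.exists_eq_succ_of_ne_zero (Nat.one_le_iff_ne_zero.mp hn)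
  set S : Set (Fin (m+1) → ℝ) := {x : Fin (m+1) → ℝ | ∃ s : Fin (m+1) → ℕ,
        (∑ i, (i.1 + 1) * s i) = (m+1) ∧ x = fun i => (s i : ℝ)} with hS
  rw [direction_affineSpan]
  -- the linear functional
  set f : (Fin (m+1) → ℝ) →ₗ[ℝ] ℝ :=
    { toFun := fun x => ∑ i, (i.1 + 1) * x i
      map_add' := by intro x y; simp [mul_add, Finset.sum_add_distrib]
      map_smul' := by
        intro c x
        simp only [Pi.smul_apply, smul_eq_mul, RingHom.id_apply, Finset.mul_sum]
        exact Finset.sum_congr rfl fun i _ => by ring } with hf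
  have hker : Module.finrank ℝ (LinearMap.ker f) = m := by
    have hsurj : Function.Surjective f := by
      intro r
      refine ⟨fun i => if i = 0 then r else 0, ?_⟩
      simp [hf, mul_ite, Finset.sum_ite_eq']
    have h1 := f.finrank_range_add_finrank_ker
    rw [LinearMap.range_eq_top.mpr hsurj] at h1
    simp [Module.finrank_pi] at h1
    omega
  have hle : vectorSpan ℝ S ≤ LinearMap.ker f := by
    rw [vectorSpan_def, Submodule.span_le]
    rintro w ⟨x, hx, y, hy, rfl⟩
    obtain ⟨s, hs, rfl⟩ := hx
    obtain ⟨t, ht, rfl⟩ := hy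
    have key : ∀ u : Fin (m+1) → ℕ, (∑ i, (i.1 + 1) * u i) = (m+1) →
        f (fun i => (u i : ℝ)) = ((m+1 : ℕ) : ℝ) := by
      intro u hu
      simp only [hf, LinearMap.coe_mk, AddHom.coe_mk]
      have : ∀ i ∈ Finset.univ (α := Fin (m+1)),
          ((i.1:ℝ)+1) * (u i : ℝ) = (((i.1+1) * u i : ℕ) : ℝ) := fun i _ => by push_cast; ring
      rw [Finset.sum_congr rfl this, ← Nat.cast_sum, hu]
    simp [LinearMap.mem_ker, vsub_eq_sub, map_sub, key s hs, key t ht]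
  -- the points
  set p : Fin (m+1) → (Fin (m+1) → ℕ) :=
    fun k i => (if i = k then 1 else 0) + (if i = 0 then m - k.1 else 0) with hp
  have hpS : ∀ k, (fun i => ((p k i : ℕ) : ℝ)) ∈ S := by
    intro k
    refine ⟨p k, ?_, rfl⟩
    simp only [hp, mul_add, Finset.sum_add_distrib, mul_ite, mul_one, mul_zero]
    rw [Finset.sum_ite_eq', Finset.sum_ite_eq']
    simp only [Finset.mem_univ, if_true, Fin.val_zero]
    have : k.1 ≤ m := Nat.lt_succ_iff.mp k.isLt
    omega
  set v : Fin m → (Fin (m+1) → ℝ) :=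
    fun j => (fun i => ((p j.succ i : ℕ) : ℝ)) - (fun i => ((p 0 i : ℕ) : ℝ)) with hv
  have hvmem : ∀ j, v j ∈ vectorSpan ℝ S := fun j =>
    vsub_mem_vectorSpan ℝ (hpS j.succ) (hpS 0)
  have hindep : LinearIndependent ℝ v := by
    apply LinearIndependent.of_comp (LinearMap.funLeft ℝ ℝ (Fin.succ : Fin m → Fin (m+1)))
    have heq : (LinearMap.funLeft ℝ ℝ (Fin.succ : Fin m → Fin (m+1))) ∘ v
        = fun j => Pi.single j (1:ℝ) := by
      funext j i
      simp [hv, hp, LinearMap.funLeft, Fin.succ_ne_zero, Fin.succ_inj, Pi.single_apply, eq_comm]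
    rw [heq]
    have hb := (Pi.basisFun ℝ (Fin m)).linearIndependent
    have hbe : ⇑(Pi.basisFun ℝ (Fin m)) = fun j => Pi.single j (1:ℝ) := by
      funext j i
      simp [Pi.basisFun_apply]
    rwa [hbe] at hb
  have hfin : Module.finrank ℝ (Submodule.span ℝ (Set.range v)) = m := by
    simpa using finrank_span_eq_card hindep
  have hsub : Submodule.span ℝ (Set.range v) ≤ vectorSpan ℝ S := by
    rw [Submodule.span_le]; rintro _ ⟨j, rfl⟩; exact hvmem j
  have h1 := Submodule.finrank_mono hsub
  have h2 := Submodule.finrank_mono hle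
  rw [hfin] at h1
  rw [hker] at h2
  simpa using le_antisymm h2 h1
end

section
/- For n ≥ k+2 ≥ 5, the affine dimension of the Newton polytope New(Z_{n,k}), i.e., the convex hull of S_{n,k} ⊂ ℝ^{n-k+1}, equals n−k−1. -/
/-!
Write `m = n - k`. Every point of `S_{n,k}` satisfies `∑ xᵢ = k` and `∑ i xᵢ = m`, so the affine
span lies in a translate of the kernel of `x ↦ (∑ xᵢ, ∑ i xᵢ)`, which has dimension `m - 1`.
Conversely, exchanging two parts `i + 1, 0` of a partition for `i, 1` keeps it in `S_{n,k}`; as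
`k ≥ 3`, the remaining `k - 2` parts can carry the rest `m - i - 1` of the weight, so
`e₀ + e_{i+1} - e₁ - eᵢ` is a difference of two points. These telescope to the vectors
`e_j - j e₁ + (j - 1) e₀`, which span the kernel.
-/

open Finset

theorem vectorSpan_le_ker_of_forall_eq {R E F : Type*} [Ring R] [AddCommGroup E] [Module R E]
    [AddCommGroup F] [Module R F] (f : E →ₗ[R] F) {s : Set E} (c : F) (hs : ∀ x ∈ s, f x = c) :
    vectorSpan R s ≤ LinearMap.ker f :=
  Submodule.span_le.2 <| by
    rintro _ ⟨x, hx, y, hy, rfl⟩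
    simp [hs x hx, hs y hy]

def sizeIndexSet (m k : ℕ) : Set (Fin (m + 1) → ℝ) :=
  {x | ∃ s : Fin (m + 1) → ℕ, (∑ i, i.1 * s i) = m ∧ (∑ i, s i) = k ∧ x = fun i => (s i : ℝ)}

def countAndWeight (m : ℕ) : (Fin (m + 1) → ℝ) →ₗ[ℝ] ℝ × ℝ :=
  (∑ i : Fin (m + 1), LinearMap.proj i).prod
    (∑ i : Fin (m + 1), ((i : ℕ) : ℝ) • LinearMap.proj i)

@[simp]
theorem countAndWeight_apply (m : ℕ) (x : Fin (m + 1) → ℝ) :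
    countAndWeight m x = (∑ i, x i, ∑ i : Fin (m + 1), ((i : ℕ) : ℝ) * x i) := by
  simp [countAndWeight]

@[simp]
theorem countAndWeight_single (m : ℕ) (i : Fin (m + 1)) (c : ℝ) :
    countAndWeight m (Pi.single i c) = (c, (i : ℕ) * c) := by
  simp [Pi.single_apply]

theorem countAndWeight_eq_of_mem {m k : ℕ} {x : Fin (m + 1) → ℝ} (hx : x ∈ sizeIndexSet m k) :
    countAndWeight m x = ((k : ℝ), (m : ℝ)) := by
  obtain ⟨s, hweight, hcount, rfl⟩ := hx
  simp only [countAndWeight_apply, Prod.mk.injEq]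
  constructor <;> exact_mod_cast ‹_›

theorem finrank_ker_countAndWeight (m : ℕ) :
    Module.finrank ℝ (LinearMap.ker (countAndWeight m)) = m - 1 := by
  rcases m with _ | m
  · have hker : LinearMap.ker (countAndWeight 0) = ⊥ := by
      refine LinearMap.ker_eq_bot'.2 fun x hx => funext fun i => ?_
      simpa [Fin.fin_one_eq_zero i] using congrArg Prod.fst hx
    rw [hker, finrank_bot]
  · have hsurj : Function.Surjective (countAndWeight (m + 1)) := by
      rintro ⟨a, b⟩
      refine ⟨Pi.single 0 (a - b) + Pi.single 1 b, ?_⟩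
      rw [map_add, countAndWeight_single, countAndWeight_single]
      simp
    have hrank := LinearMap.finrank_range_add_finrank_ker (countAndWeight (m + 1))
    rw [LinearMap.range_eq_top.2 hsurj, finrank_top, Module.finrank_prod, Module.finrank_self,
      Module.finrank_fin_fun] at hrank
    omega

theorem single_add_single_sub_mem_vectorSpan {m k : ℕ} (s : Fin (m + 1) → ℕ)
    {a b c d : Fin (m + 1)} (habcd : (a : ℕ) + b = c + d) (hweight : ∑ i, i.1 * s i + a + b = m)
    (hcount : ∑ i, s i + 2 = k) :
    Pi.single a 1 + Pi.single b 1 - Pi.single c 1 - Pi.single d 1 ∈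
      vectorSpan ℝ (sizeIndexSet m k) := by
  have hmem : ∀ p q : Fin (m + 1), (p : ℕ) + q = a + b →
      (fun i => (((s + Pi.single p 1 + Pi.single q 1 : Fin (m + 1) → ℕ) i : ℕ) : ℝ)) ∈
        sizeIndexSet m k := by
    intro p q hpq
    refine ⟨_, ?_, ?_, rfl⟩
    · simp only [Pi.add_apply, Pi.single_apply, mul_add, mul_ite, mul_one, mul_zero,
        sum_add_distrib, sum_ite_eq', mem_univ, ↓reduceIte]
      omega
    · simp only [Pi.add_apply, sum_add_distrib, sum_pi_single', mem_univ, ↓reduceIte]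
      omega
  convert vsub_mem_vectorSpan ℝ (hmem a b rfl) (hmem c d habcd.symm) using 1
  ext i
  simp only [Pi.sub_apply, Pi.add_apply, Pi.single_apply, Nat.cast_add, Nat.cast_ite,
    Nat.cast_one, Nat.cast_zero, Pi.vsub_apply, vsub_eq_sub]
  split_ifs <;> ring

def kerVector (m : ℕ) (j : Fin (m + 1)) : Fin (m + 1) → ℝ :=
  Pi.single j 1 - ((j : ℕ) : ℝ) • Pi.single 1 1 + (((j : ℕ) : ℝ) - 1) • Pi.single 0 1

theorem kerVector_mem_vectorSpan {m k : ℕ} (hk : 3 ≤ k) (j : Fin (m + 1)) :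
    kerVector m j ∈ vectorSpan ℝ (sizeIndexSet m k) := by
  induction j using Fin.induction with
  | zero => simp [kerVector]
  | succ i ih =>
    have hstep : kerVector m i.succ = kerVector m i.castSucc +
        (Pi.single 0 1 + Pi.single i.succ 1 - Pi.single 1 1 - Pi.single i.castSucc 1) := by
      simp only [kerVector, Fin.val_succ, Fin.val_castSucc]
      push_cast
      module
    rw [hstep]
    refine add_mem ih (single_add_single_sub_mem_vectorSpan
      (Pi.single 0 (k - 3) + Pi.single i.succ.rev 1) ?_ ?_ ?_)
    · simp [Nat.mod_eq_of_lt (show 1 < m + 1 by have := i.isLt; omega), add_comm]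
    · simp [sum_add_distrib, mul_add, Pi.single_apply]
    · simp only [Pi.add_apply, sum_add_distrib, sum_pi_single', mem_univ, ↓reduceIte]
      omega

theorem sum_smul_kerVector_of_mem_ker {m : ℕ} {x : Fin (m + 1) → ℝ}
    (hx : x ∈ LinearMap.ker (countAndWeight m)) : ∑ j, x j • kerVector m j = x := by
  obtain ⟨hsum, hweight⟩ : ∑ i, x i = 0 ∧ ∑ i : Fin (m + 1), ((i : ℕ) : ℝ) * x i = 0 := by
    simpa using hx
  simp only [kerVector, smul_add, smul_sub, smul_smul, sum_add_distrib, sum_sub_distrib,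
    ← sum_smul, mul_sub, mul_one]
  simp_rw [mul_comm (x _), hsum, hweight, sub_zero, zero_smul, add_zero, sub_zero]
  exact (pi_eq_sum_univ' x).symm

theorem vectorSpan_sizeIndexSet {m k : ℕ} (hk : 3 ≤ k) :
    vectorSpan ℝ (sizeIndexSet m k) = LinearMap.ker (countAndWeight m) := by
  refine le_antisymm
    (vectorSpan_le_ker_of_forall_eq _ _ fun x hx => countAndWeight_eq_of_mem hx) fun x hx => ?_
  rw [← sum_smul_kerVector_of_mem_ker hx]
  exact Submodule.sum_mem _ fun j _ => Submodule.smul_mem _ _ (kerVector_mem_vectorSpan hk j)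

theorem newton_polytope_affine_dimension_general (n k : ℕ) (hk : 3 ≤ k) :
    Module.finrank ℝ
      (affineSpan ℝ {x : Fin (n - k + 1) → ℝ | ∃ s : Fin (n - k + 1) → ℕ,
        (∑ i, i.1 * s i) = n - k ∧ (∑ i, s i) = k ∧
          x = fun i => (s i : ℝ)}).direction = n - k - 1 := by
  change Module.finrank ℝ (affineSpan ℝ (sizeIndexSet (n - k) k)).direction = n - k - 1
  rw [direction_affineSpan, vectorSpan_sizeIndexSet hk, finrank_ker_countAndWeight]

/-- for `n ≥ k+2 ≥ 5`, the Newton polytope `New(Z_{n,k})`, the convex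
hull of `S_{n,k} ⊂ ℝ^{n-k+1}`, has affine dimension `n-k-1`. -/
theorem newton_polytope_affine_dimension (n k : ℕ) (hk : 3 ≤ k) (hn : k + 2 ≤ n) :
    Module.finrank ℝ
      (affineSpan ℝ {x : Fin (n - k + 1) → ℝ | ∃ s : Fin (n - k + 1) → ℕ,
        (∑ i, i.1 * s i) = n - k ∧ (∑ i, s i) = k ∧
          x = fun i => (s i : ℝ)}).direction = n - k - 1 :=
  newton_polytope_affine_dimension_general n k hk
end

section
/- The set B = {e_{i_1} + e_{i_4} − e_{i_1+1} − e_{i_4−1} : 1 ≤ i_1 < i_4 ≤ m, i_1 + 2 ≤ i_4} is a Markov basis for the matrix A with rows (0,1,...,m-1) and (1,...,1): for every b ∈ ℕ^2, any two elements s, s' of the fiber F_b(A) = {s ∈ ℕ^m : As = b} are connected by a finite sequence of moves from ±B staying inside F_b(A). -/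
/-!
Moves of `-B` stay in the fiber and strictly lower `∑ t² s_t`, so every point of a fiber
descends by them to a point to which no move of `-B` applies, i.e. one supported on two
consecutive coordinates `v, v + 1`. Such a point is determined by its fiber `(b₁, b₂)`:
`v = ⌊b₁ / b₂⌋`, `s_{v+1} = b₁ - v b₂` and `s_v = b₂ - s_{v+1}`. Hence `s` and `s'` descend to
the same point, and reversing the second descent connects them.
-/

open Finset

/-- The set of moves `B = {e_{i₁} + e_{i₄} − e_{i₁+1} − e_{i₄−1} : i₁ + 2 ≤ i₄}`
(in `1`-indexed notation) in `ℤ^m`. -/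
def movesB (m : ℕ) : Set (Fin m → ℤ) :=
  {z | ∃ i₁ i₄ : Fin m, i₁.1 + 2 ≤ i₄.1 ∧
    z = fun t => (if t = i₁ then 1 else 0) + (if t = i₄ then 1 else 0)
      - (if t.1 = i₁.1 + 1 then 1 else 0) - (if t.1 + 1 = i₄.1 then 1 else 0)}

namespace RationalNormalCurve

open Relation

variable {m : ℕ}

def downMove (i k : Fin m) : Fin m → ℤ := fun t =>
  (if t.1 = i.1 + 1 then 1 else 0) + (if t.1 + 1 = k.1 then 1 else 0)
    - (if t = i then 1 else 0) - (if t = k then 1 else 0)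

lemma neg_downMove_mem_movesB {i k : Fin m} (h : i.1 + 2 ≤ k.1) : -downMove i k ∈ movesB m :=
  ⟨i, k, h, funext fun t => by simp only [Pi.neg_apply, downMove]; ring⟩

lemma sum_mul_downMove (c : ℕ → ℤ) {i k : Fin m} (h : i.1 + 2 ≤ k.1) :
    ∑ t, c t.1 * downMove i k t = c (i.1 + 1) + c (k.1 - 1) - c i.1 - c k.1 := by
  have hk := k.2
  have hi₁ (t : Fin m) : t.1 = i.1 + 1 ↔ t = ⟨i.1 + 1, by omega⟩ := by rw [Fin.ext_iff]
  have hk₁ (t : Fin m) : t.1 + 1 = k.1 ↔ t = ⟨k.1 - 1, by omega⟩ := by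
    simp only [Fin.ext_iff]; omega
  simp only [downMove, hi₁, hk₁, mul_add, mul_sub, mul_ite, mul_one, mul_zero,
    sum_add_distrib, sum_sub_distrib, sum_ite_eq', mem_univ, if_true]

lemma sum_mul_add_downMove (c : ℕ → ℤ) (s : Fin m → ℤ) {i k : Fin m} (h : i.1 + 2 ≤ k.1) :
    ∑ t, c t.1 * (s + downMove i k) t
      = ∑ t, c t.1 * s t + (c (i.1 + 1) + c (k.1 - 1) - c i.1 - c k.1) := by
  simp only [Pi.add_apply, mul_add, sum_add_distrib, sum_mul_downMove c h]

lemma add_downMove_nonneg {s : Fin m → ℤ} (hs : 0 ≤ s) {i k : Fin m} (h : i.1 + 2 ≤ k.1)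
    (hi : s i ≠ 0) (hk : s k ≠ 0) : 0 ≤ s + downMove i k := by
  have hs' : ∀ t, 0 ≤ s t := hs
  intro t
  have := hs' t
  have := hs' i
  have := hs' k
  simp only [Pi.add_apply, Pi.zero_apply, downMove]
  split_ifs <;> subst_vars <;> omega

def MarkovStep (u v : Fin m → ℤ) : Prop :=
  0 ≤ u ∧ 0 ≤ v ∧ (v - u ∈ movesB m ∨ u - v ∈ movesB m)

instance : Std.Symm (MarkovStep (m := m)) where
  symm _ _ h := ⟨h.2.1, h.1, h.2.2.symm⟩

lemma nonneg_of_reflTransGen {s r : Fin m → ℤ} (h : ReflTransGen MarkovStep s r) (hs : 0 ≤ s) :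
    0 ≤ r := by
  rcases h.cases_tail with rfl | ⟨u, -, hu⟩
  exacts [hs, hu.2.1]

/-- No move of `-B` can be applied to `s` inside `ℕ^m`. -/
def IsReduced (s : Fin m → ℤ) : Prop :=
  ∀ i k : Fin m, i.1 + 2 ≤ k.1 → s i = 0 ∨ s k = 0

/-- Each move of `-B` keeps the fiber and lowers `∑ t² s_t` by `2 (k - i - 1) > 0`. -/
lemma exists_reduced (s : Fin m → ℤ) (hs : 0 ≤ s) :
    ∃ r, ReflTransGen MarkovStep s r ∧ IsReduced r ∧
      ∑ t, r t = ∑ t, s t ∧ ∑ t, (t.1 : ℤ) * r t = ∑ t, (t.1 : ℤ) * s t := by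
  obtain ⟨n, hn⟩ : ∃ n, (∑ t, (t.1 : ℤ) ^ 2 * s t).toNat = n := ⟨_, rfl⟩
  induction n using Nat.strong_induction_on generalizing s with | _ n ih => ?_
  by_cases hred : IsReduced s
  · exact ⟨s, .refl, hred, rfl, rfl⟩
  simp only [IsReduced, not_forall, not_or] at hred
  obtain ⟨i, k, hik, hi, hk⟩ := hred
  have hk₁ : 1 ≤ k.1 := by omega
  have hs₁ : 0 ≤ s + downMove i k := add_downMove_nonneg hs hik hi hk
  have hN : ∑ t, (s + downMove i k) t = ∑ t, s t := by
    simpa using sum_mul_add_downMove (fun _ => 1) s hik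
  have hW : ∑ t, (t.1 : ℤ) * (s + downMove i k) t = ∑ t, (t.1 : ℤ) * s t := by
    have := sum_mul_add_downMove (fun n => (n : ℤ)) s hik
    push_cast [hk₁] at this
    linarith
  have hQ := sum_mul_add_downMove (fun n => (n : ℤ) ^ 2) s hik
  push_cast [hk₁] at hQ
  have hQ₁ : 0 ≤ ∑ t, (t.1 : ℤ) ^ 2 * (s + downMove i k) t :=
    sum_nonneg fun t _ => mul_nonneg (sq_nonneg _) (hs₁ t)
  have hdec : (∑ t, (t.1 : ℤ) ^ 2 * (s + downMove i k) t).toNat < n := by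
    have : ((i.1 : ℤ) + 1) ^ 2 + ((k.1 : ℤ) - 1) ^ 2 - (i.1 : ℤ) ^ 2 - (k.1 : ℤ) ^ 2
        = 2 * (i.1 + 1 - k.1) := by ring
    omega
  obtain ⟨r, hr, hred, hrN, hrW⟩ := ih _ hdec _ hs₁ rfl
  refine ⟨r, .head ⟨hs, hs₁, .inr ?_⟩ hr, hred, hrN.trans hN, hrW.trans hW⟩
  simpa using neg_downMove_mem_movesB hik

lemma eq_zero_of_support_subset_pair {d : Fin m → ℤ} {a b : ℕ} (hab : a ≠ b)
    (hsupp : ∀ t, d t ≠ 0 → t.1 = a ∨ t.1 = b)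
    (hN : ∑ t, d t = 0) (hW : ∑ t, (t.1 : ℤ) * d t = 0) : d = 0 := by
  -- `∑ (t - b) d_t = 0` has at most one nonzero term, the one at index `a`
  have key (a b : ℕ) (hab : a ≠ b) (hsupp : ∀ t, d t ≠ 0 → t.1 = a ∨ t.1 = b) (t₀ : Fin m)
      (ht₀ : t₀.1 = a) : d t₀ = 0 := by
    have hsum : ∑ t, ((t.1 : ℤ) - b) * d t = ((a : ℤ) - b) * d t₀ := by
      rw [sum_eq_single t₀ (fun t _ htt₀ => ?_) (by simp), ht₀]
      by_cases hdt : d t = 0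
      · simp [hdt]
      rcases hsupp t hdt with hta | htb
      · exact absurd (Fin.ext (hta.trans ht₀.symm)) htt₀
      · simp [htb]
    have hzero : ∑ t, ((t.1 : ℤ) - b) * d t = 0 := by
      simp only [sub_mul, sum_sub_distrib, ← mul_sum, hN, hW, mul_zero, sub_zero]
    have hab' : (a : ℤ) - b ≠ 0 := sub_ne_zero.mpr (by exact_mod_cast hab)
    exact (mul_eq_zero.mp (hsum.symm.trans hzero)).resolve_left hab'
  funext t
  by_contra hdt
  rcases hsupp t hdt with hta | htb
  · exact hdt (key a b hab hsupp t hta)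
  · exact hdt (key b a hab.symm (fun t ht => (hsupp t ht).symm) t htb)

lemma IsReduced.exists_support_subset_pair {s : Fin m → ℤ} (hs : 0 ≤ s) (hred : IsReduced s)
    (hN : ∑ t, s t ≠ 0) :
    ∃ v : ℕ, (∀ t, s t ≠ 0 → t.1 = v ∨ t.1 = v + 1) ∧
      (v : ℤ) * ∑ t, s t ≤ ∑ t, (t.1 : ℤ) * s t ∧
      ∑ t, (t.1 : ℤ) * s t < (v + 1) * ∑ t, s t := by
  have hs' : ∀ t, 0 ≤ s t := hs
  obtain ⟨t₀, -, ht₀⟩ := exists_ne_zero_of_sum_ne_zero hN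
  have hS : (univ.filter fun t => s t ≠ 0).Nonempty := ⟨t₀, by simpa using ht₀⟩
  set v := (univ.filter fun t => s t ≠ 0).min' hS
  have hv : s v ≠ 0 := by simpa using min'_mem _ hS
  have hmin (t : Fin m) (ht : s t ≠ 0) : v ≤ t := min'_le _ _ (by simpa using ht)
  have hsupp (t : Fin m) (ht : s t ≠ 0) : t.1 = v.1 ∨ t.1 = v.1 + 1 := by
    have := hmin t ht
    rcases Nat.lt_or_ge t.1 (v.1 + 2) with h | h
    · omega
    · exact (hred v t h).elim (absurd · hv) (absurd · ht)
  refine ⟨v, hsupp, ?_, ?_⟩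
  · have : 0 ≤ ∑ t, ((t.1 : ℤ) - v) * s t := sum_nonneg fun t _ => by
      by_cases ht : s t = 0
      · simp [ht]
      · exact mul_nonneg (by have := hmin t ht; omega) (hs' t)
    simpa [sub_mul, sum_sub_distrib, ← mul_sum] using this
  · have : 0 < ∑ t, ((v : ℤ) + 1 - t.1) * s t := by
      refine sum_pos' (fun t _ => ?_) ⟨v, mem_univ _, by simpa using (hs' v).lt_of_ne' hv⟩
      by_cases ht : s t = 0
      · simp [ht]
      · exact mul_nonneg (by have := hsupp t ht; omega) (hs' t)
    simpa [sub_mul, add_mul, sum_sub_distrib, sum_add_distrib, ← mul_sum] using this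

lemma eq_zero_of_sum_eq_zero {s : Fin m → ℤ} (hs : 0 ≤ s) (hN : ∑ t, s t = 0) : s = 0 :=
  funext fun t => (sum_eq_zero_iff_of_nonneg fun t _ => hs t).mp hN t (mem_univ t)

lemma IsReduced.eq {s s' : Fin m → ℤ} (hs : 0 ≤ s) (hs' : 0 ≤ s') (hred : IsReduced s)
    (hred' : IsReduced s') (hN : ∑ t, s t = ∑ t, s' t)
    (hW : ∑ t, (t.1 : ℤ) * s t = ∑ t, (t.1 : ℤ) * s' t) : s = s' := by
  by_cases hN₀ : ∑ t, s t = 0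
  · rw [eq_zero_of_sum_eq_zero hs hN₀, eq_zero_of_sum_eq_zero hs' (hN ▸ hN₀)]
  obtain ⟨v, hsupp, hv₁, hv₂⟩ := hred.exists_support_subset_pair hs hN₀
  obtain ⟨v', hsupp', hv₁', hv₂'⟩ := hred'.exists_support_subset_pair hs' (hN ▸ hN₀)
  have hpos : 0 < ∑ t, s t := (sum_nonneg fun t _ => hs t).lt_of_ne' hN₀
  rw [← hN, ← hW] at hv₁' hv₂'
  have hvv' : v = v' := by
    have h₁ : (v : ℤ) < v' + 1 := lt_of_mul_lt_mul_right (hv₁.trans_lt hv₂') hpos.le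
    have h₂ : (v' : ℤ) < v + 1 := lt_of_mul_lt_mul_right (hv₁'.trans_lt hv₂) hpos.le
    omega
  subst hvv'
  refine sub_eq_zero.mp (eq_zero_of_support_subset_pair (a := v) (b := v + 1) (by omega)
    (fun t ht => ?_) ?_ ?_)
  · by_cases hst : s t = 0
    · exact hsupp' t (by simpa [hst] using ht)
    · exact hsupp t hst
  · simp [sum_sub_distrib, hN]
  · simp [mul_sub, sum_sub_distrib, hW]

lemma sum_filter_lt_snoc {M : Type*} [AddCommMonoid M] {L : ℕ} (z : Fin L → M) (y : M)
    (j : ℕ) :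
    ∑ l ∈ univ.filter (fun l : Fin (L + 1) => l.1 < j), (Fin.snoc z y : Fin (L + 1) → M) l
      = ∑ l ∈ univ.filter (fun l : Fin L => l.1 < j), z l + if L < j then y else 0 := by
  simp [sum_filter, Fin.sum_univ_castSucc]

lemma exists_path_of_reflTransGen {s s' : Fin m → ℤ} (h : ReflTransGen MarkovStep s s')
    (hs : 0 ≤ s) :
    ∃ (L : ℕ) (z : Fin L → (Fin m → ℤ)), (∀ l, z l ∈ movesB m ∨ -z l ∈ movesB m) ∧
      s' = s + ∑ l, z l ∧ ∀ j : ℕ, 0 ≤ s + ∑ l ∈ univ.filter (fun l : Fin L => l.1 < j), z l := by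
  induction h with
  | refl => exact ⟨0, Fin.elim0, fun l => l.elim0, by simp, fun _ => by simpa using hs⟩
  | @tail u v _ huv ih =>
    obtain ⟨L, z, hz, hu, hpart⟩ := ih
    refine ⟨L + 1, Fin.snoc z (v - u), fun l => ?_, ?_, fun j => ?_⟩
    · induction l using Fin.lastCases with
      | last => simpa using huv.2.2
      | cast l => simpa using hz l
    · simp [Fin.sum_univ_castSucc, ← add_assoc, ← hu]
    · rw [sum_filter_lt_snoc]
      split_ifs with hLj
      · have hall : univ.filter (fun l : Fin L => l.1 < j) = univ :=
          filter_true_of_mem fun l _ => l.2.trans hLj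
        simpa [hall, ← add_assoc, ← hu] using huv.2.1
      · simpa using hpart j

end RationalNormalCurve

/-- `B` is a Markov basis for the matrix `A` with rows `(0,1,...,m-1)`
and `(1,...,1)`: any two points of a fiber `{s ∈ ℕ^m : As = b}` are connected by a
path of moves from `±B` staying inside the fiber (nonnegativity of all partial sums
suffices, since each move is in `ker A`). -/
theorem markov_basis_rational_normal_curve
    (m : ℕ) (b₁ b₂ : ℤ) (s s' : Fin m → ℤ)
    (hs : ∀ j, 0 ≤ s j) (hs' : ∀ j, 0 ≤ s' j)
    (hAs : (∑ j, (j.1 : ℤ) * s j) = b₁ ∧ (∑ j, s j) = b₂)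
    (hAs' : (∑ j, (j.1 : ℤ) * s' j) = b₁ ∧ (∑ j, s' j) = b₂) :
    ∃ (L : ℕ) (z : Fin L → (Fin m → ℤ)),
      (∀ l, z l ∈ movesB m ∨ -z l ∈ movesB m) ∧
      s' = s + ∑ l, z l ∧
      ∀ j : ℕ, j ≤ L → ∀ t : Fin m,
        0 ≤ s t + ∑ l ∈ Finset.univ.filter (fun l : Fin L => l.1 < j), z l t := by
  obtain ⟨r, hsr, hred, hrN, hrW⟩ := RationalNormalCurve.exists_reduced s hs
  obtain ⟨r', hsr', hred', hrN', hrW'⟩ := RationalNormalCurve.exists_reduced s' hs'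
  have hr := RationalNormalCurve.nonneg_of_reflTransGen hsr hs
  have hr' := RationalNormalCurve.nonneg_of_reflTransGen hsr' hs'
  have hrr' : r = r' := hred.eq hr hr' hred' (by rw [hrN, hrN', hAs.2, hAs'.2])
    (by rw [hrW, hrW', hAs.1, hAs'.1])
  have hss' : Relation.ReflTransGen RationalNormalCurve.MarkovStep s s' :=
    hsr.trans (hrr' ▸ Std.Symm.symm _ _ hsr')
  obtain ⟨L, z, hz, hs's, hpart⟩ := RationalNormalCurve.exists_path_of_reflTransGen hss' hs
  exact ⟨L, z, hz, hs's, fun j _ t => by simpa using hpart j t⟩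
end
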